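/- arXiv:math/0506323 — 2 statements merged into one kernel-verified Lean document; each statement's English description precedes it below -/
import Mathlib

section
/- Let a and e be non-negative integers and let κ > 0. Then there exists δ > 0 such that for all real z with 0 < z < δ the series Σ_{t ≥ 0, t ≡ a+e (mod 2)} Z⁽¹⁾_t(a→e;κ) z^t converges and equals (1/√(1−4z²)) · ((1−√(1−4z²))/(2z))^{|e−a|} − (1/√(1−4z²)) · ((1−√(1−4z²))/(2z))^{e+a} · ( 1 − 2κ√(1−4z²) / ( (2−κ) + κ√(1−4z²) ) ). -/
/-!
Splitting off the first step of a walk gives `Z_{t+1}(a) = Z_t(a-1) + Z_t(a+1)` for `a ≥ 1` and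
`Z_{t+1}(0) = κ Z_t(1)`. Hence, for small `z`, the generating functions
`S_b = ∑_t Z_t(b → e) z^t` satisfy `S_{b+1} = [b+1 = e] + z (S_b + S_{b+2})` and
`S_0 = κ [e = 0] + κ z S_1`. With `Q = √(1-4z²)` and `B = (1-Q)/(2z)`, the root of
`z B² - B + z = 0`, the closed form `B^{|e-b|}/Q - B^{e+b}/Q + B^{e+b} U` solves the same system.
Both sides are bounded in `b`, and a bounded solution of the homogeneous system vanishes, because
the recurrences contract it by the factor `max (2z) (κz) < 1`. Finally, walks whose length has
the wrong parity do not exist.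
-/

open Finset

/-- Height of a lattice walk after `i` steps, starting at height `a`, with step
sequence `s` (`true` = up-step `(1,1)`, `false` = down-step `(1,-1)`). -/
def ht {t : ℕ} (a : ℤ) (s : Fin t → Bool) (i : ℕ) : ℤ :=
  a + ∑ j ∈ Finset.range i, (if h : j < t then (if s ⟨j, h⟩ then (1 : ℤ) else -1) else 0)

/-- The walk starting at `(0, a)` with steps `s` ends at `(t, e)` and never
runs below the x-axis. -/
def WalkOK {t : ℕ} (a e : ℤ) (s : Fin t → Bool) : Prop :=
  ht a s t = e ∧ ∀ i ≤ t, 0 ≤ ht a s i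

/-- The number of contacts of the walk with the x-axis (start and end points count). -/
def contacts {t : ℕ} (a : ℤ) (s : Fin t → Bool) : ℕ :=
  ((Finset.range (t + 1)).filter fun i => ht a s i = 0).card

/-- A family of `n` vicious walkers, the `i`-th of length `T i`, starting at
`(0, a i)` and ending at `(T i, e i)`: no two of the walks share a lattice point
and none of the walks ever passes below the x-axis. -/
def FamilyOK {n : ℕ} (T : Fin n → ℕ) (a e : Fin n → ℤ)
    (P : (i : Fin n) → Fin (T i) → Bool) : Prop :=
  (∀ i, WalkOK (a i) (e i) (P i)) ∧
    ∀ i j, i ≠ j → ∀ m, m ≤ T i → m ≤ T j → ht (a i) (P i) m ≠ ht (a j) (P j) m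

/-- Partition function for families of vicious walkers with general lengths:
each family is weighted by `κ` to the power of its total number of contacts. -/
noncomputable def Zgen (n : ℕ) (T : Fin n → ℕ) (a e : Fin n → ℤ) (κ : ℝ) : ℝ :=
  ∑ P ∈ @Finset.filter _ (FamilyOK T a e) (Classical.decPred _) Finset.univ,
    κ ^ (∑ i : Fin n, contacts (a i) (P i))

/-- The partition function `Z^{(n)}_t(a → e; κ)`. -/
noncomputable def Zpart (n t : ℕ) (a e : Fin n → ℤ) (κ : ℝ) : ℝ :=
  Zgen n (fun _ => t) a e κ

/-- The single-walker partition function `Z^{(1)}_t(a → e; κ)`. -/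
noncomputable def Z1 (t : ℕ) (a e : ℤ) (κ : ℝ) : ℝ :=
  Zpart 1 t (fun _ => a) (fun _ => e) κ

/-- The watermelon partition function `Z^{(n)}_t(y; κ)`. -/
noncomputable def Zy (n t y : ℕ) (κ : ℝ) : ℝ :=
  Zpart n t (fun i => 2 * ((i : ℕ) : ℤ)) (fun i => (y : ℤ) + 2 * ((i : ℕ) : ℤ)) κ

/-- `Nfam n t y ℓ` is the number of families of `n` vicious walkers, the `i`-th
running from `(0, 2i-2)` to `(t, y+2i-2)`, with exactly `ℓ` contacts in total. -/
noncomputable def Nfam (n t y ℓ : ℕ) : ℕ :=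
  (@Finset.filter _
      (fun P : Fin n → Fin t → Bool =>
        FamilyOK (fun _ => t) (fun i => 2 * ((i : ℕ) : ℤ))
            (fun i => (y : ℤ) + 2 * ((i : ℕ) : ℤ)) P ∧
          (∑ i : Fin n, contacts (2 * ((i : ℕ) : ℤ)) (P i)) = ℓ)
      (Classical.decPred _) Finset.univ).card

/-- The normalized mean number of contacts `M̄^{(n)}_t(y; κ)`. -/
noncomputable def Mbar (n t y : ℕ) (κ : ℝ) : ℝ :=
  (∑' ℓ : ℕ, (ℓ : ℝ) * (Nfam n t y ℓ : ℝ) * κ ^ ℓ) /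
    (∑' ℓ : ℕ, (Nfam n t y ℓ : ℝ) * κ ^ ℓ)

/-- The binomial coefficient `C(m, k)` for integers `m`, `k`: it equals
`m!/(k!(m-k)!)` for `0 ≤ k ≤ m`, equals `1` if `k = 0` (for every integer `m`),
and equals `0` otherwise. -/
noncomputable def bin (m k : ℤ) : ℝ :=
  if 0 ≤ k ∧ k ≤ m then (Nat.choose m.toNat k.toNat : ℝ)
  else if k = 0 then 1 else 0

/-- The real factorial of an integer, with value `0` at negative integers (so
that, via `x / 0 = 0`, the convention `1/m! = 0` for negative `m` holds). -/
noncomputable def fact (m : ℤ) : ℝ :=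
  if 0 ≤ m then (m.toNat.factorial : ℝ) else 0

/-- The Pochhammer symbol `(x)_m = x (x+1) ⋯ (x+m-1)`. -/
noncomputable def poch (x : ℝ) (m : ℕ) : ℝ :=
  ∏ j ∈ Finset.range m, (x + (j : ℝ))

section Walks

variable {t : ℕ}

lemma ht_zero (a : ℤ) (s : Fin t → Bool) : ht a s 0 = a := by
  simp [ht]

lemma ht_of_fin_zero (a : ℤ) (s : Fin 0 → Bool) (i : ℕ) : ht a s i = a := by
  simp [ht]

lemma ht_cons_succ (a : ℤ) (b : Bool) (s : Fin t → Bool) (i : ℕ) :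
    ht a (Fin.cons b s) (i + 1) = ht (a + if b then 1 else -1) s i := by
  have hstep : ∀ j : ℕ,
      (if h : j + 1 < t + 1 then (if (Fin.cons b s : Fin (t + 1) → Bool) ⟨j + 1, h⟩
        then (1 : ℤ) else -1) else 0) =
        if h : j < t then (if s ⟨j, h⟩ then 1 else -1) else 0 := by
    intro j
    by_cases h : j < t
    · rw [dif_pos (Nat.succ_lt_succ h), dif_pos h]
      exact congrArg (fun c : Bool => if c then (1 : ℤ) else -1)
        (Fin.cons_succ (α := fun _ => Bool) b s ⟨j, h⟩)
    · rw [dif_neg (by omega), dif_neg h]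
  simp only [ht, Finset.sum_range_succ', hstep, dif_pos (Nat.succ_pos t)]
  simp only [Fin.zero_eta, Fin.cons_zero]
  ring

lemma walkOK_cons (a e : ℤ) (b : Bool) (s : Fin t → Bool) :
    WalkOK a e (Fin.cons b s) ↔ 0 ≤ a ∧ WalkOK (a + if b then 1 else -1) e s := by
  constructor
  · rintro ⟨hend, hpos⟩
    refine ⟨by simpa [ht_zero] using hpos 0 (Nat.zero_le _), ?_, fun i hi => ?_⟩
    · rwa [← ht_cons_succ]
    · rw [← ht_cons_succ]
      exact hpos (i + 1) (by omega)
  · rintro ⟨ha, hend, hpos⟩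
    refine ⟨by rwa [ht_cons_succ], fun i hi => ?_⟩
    cases i with
    | zero => rwa [ht_zero]
    | succ i =>
      rw [ht_cons_succ]
      exact hpos i (by omega)

lemma contacts_cons (a : ℤ) (b : Bool) (s : Fin t → Bool) :
    contacts a (Fin.cons b s) =
      (if a = 0 then 1 else 0) + contacts (a + if b then 1 else -1) s := by
  classical
  simp only [contacts, Finset.card_filter, Finset.sum_range_succ', ht_cons_succ, ht_zero]
  omega

lemma contacts_le (a : ℤ) (s : Fin t → Bool) : contacts a s ≤ t + 1 :=
  (Finset.card_filter_le _ _).trans (Finset.card_range _).le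

open Classical in
noncomputable def walkWeight (a e : ℤ) (κ : ℝ) (s : Fin t → Bool) : ℝ :=
  if WalkOK a e s then κ ^ contacts a s else 0

lemma walkWeight_of_neg {a : ℤ} (ha : a < 0) (e : ℤ) (κ : ℝ) (s : Fin t → Bool) :
    walkWeight a e κ s = 0 := by
  refine if_neg fun h => ?_
  have := h.2 0 (Nat.zero_le t)
  rw [ht_zero] at this
  omega

lemma walkWeight_cons (a e : ℤ) (κ : ℝ) (b : Bool) (s : Fin t → Bool) :
    walkWeight a e κ (Fin.cons b s) =
      if 0 ≤ a then κ ^ (if a = 0 then 1 else 0) * walkWeight (a + if b then 1 else -1) e κ s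
      else 0 := by
  unfold walkWeight
  rw [walkOK_cons, contacts_cons, pow_add]
  by_cases ha : 0 ≤ a <;> by_cases hw : WalkOK (a + if b then 1 else -1) e s <;> simp [ha, hw]

lemma walkWeight_nonneg {κ : ℝ} (hκ : 0 ≤ κ) (a e : ℤ) (s : Fin t → Bool) :
    0 ≤ walkWeight a e κ s := by
  unfold walkWeight
  split_ifs <;> positivity

lemma walkWeight_le {κ : ℝ} (hκ : 0 ≤ κ) (a e : ℤ) (s : Fin t → Bool) :
    walkWeight a e κ s ≤ (κ + 1) ^ (t + 1) := by
  unfold walkWeight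
  split_ifs
  · calc κ ^ contacts a s ≤ (κ + 1) ^ contacts a s := by gcongr; linarith
      _ ≤ (κ + 1) ^ (t + 1) := pow_le_pow_right₀ (by linarith) (contacts_le a s)
  · positivity

end Walks

section PartitionFunction

lemma Z1_eq_sum_walkWeight (t : ℕ) (a e : ℤ) (κ : ℝ) :
    Z1 t a e κ = ∑ s : Fin t → Bool, walkWeight a e κ s := by
  classical
  unfold Z1 Zpart Zgen
  rw [Finset.sum_filter]
  refine Fintype.sum_equiv (Equiv.funUnique (Fin 1) (Fin t → Bool)) _ _ fun P => ?_
  have hfamily : FamilyOK (fun _ => t) (fun _ => a) (fun _ => e) P ↔ WalkOK a e (P 0) :=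
    ⟨fun h => h.1 0, fun h => ⟨fun i => Subsingleton.elim 0 i ▸ h,
      fun i j hij => absurd (Subsingleton.elim i j) hij⟩⟩
  simp only [hfamily, Fin.sum_univ_one, walkWeight]
  rfl

lemma Z1_of_neg {a : ℤ} (ha : a < 0) (t : ℕ) (e : ℤ) (κ : ℝ) : Z1 t a e κ = 0 := by
  simp [Z1_eq_sum_walkWeight, walkWeight_of_neg ha]

lemma Z1_zero (a e : ℤ) (κ : ℝ) :
    Z1 0 a e κ = if a = e ∧ 0 ≤ a then κ ^ (if a = 0 then 1 else 0) else 0 := by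
  classical
  have hcontacts (s : Fin 0 → Bool) : contacts a s = if a = 0 then 1 else 0 := by
    by_cases h : a = 0 <;> simp [contacts, ht_of_fin_zero, h]
  have hwalk (s : Fin 0 → Bool) : WalkOK a e s ↔ a = e ∧ 0 ≤ a := by
    simp [WalkOK, ht_of_fin_zero]
  simp [Z1_eq_sum_walkWeight, walkWeight, hcontacts, hwalk]

lemma Z1_succ {a : ℤ} (ha : 0 ≤ a) (t : ℕ) (e : ℤ) (κ : ℝ) :
    Z1 (t + 1) a e κ =
      κ ^ (if a = 0 then 1 else 0) * (Z1 t (a + 1) e κ + Z1 t (a - 1) e κ) := by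
  simp only [Z1_eq_sum_walkWeight, ← (Fin.consEquiv fun _ => Bool).sum_comp,
    Fintype.sum_prod_type, Fintype.sum_bool, Fin.consEquiv, Equiv.coe_fn_mk, walkWeight_cons,
    if_pos ha, ← Finset.mul_sum, if_true, Bool.false_eq_true, if_false, sub_eq_add_neg]

lemma Z1_eq_zero_of_odd {t : ℕ} {a e : ℤ} {κ : ℝ} (h : Odd ((t : ℤ) + a + e)) :
    Z1 t a e κ = 0 := by
  induction t generalizing a with
  | zero =>
    rw [Z1_zero, if_neg]
    rintro ⟨rfl, -⟩
    exact Int.not_odd_iff_even.2 ⟨a, by ring⟩ h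
  | succ t ih =>
    rcases lt_or_ge a 0 with ha | ha
    · exact Z1_of_neg ha _ _ _
    · rw [Int.odd_iff] at h
      push_cast at h
      rw [Z1_succ ha, ih (by rw [Int.odd_iff]; omega), ih (by rw [Int.odd_iff]; omega), add_zero,
        mul_zero]

lemma Z1_nonneg {κ : ℝ} (hκ : 0 ≤ κ) (t : ℕ) (a e : ℤ) : 0 ≤ Z1 t a e κ := by
  rw [Z1_eq_sum_walkWeight]
  exact Finset.sum_nonneg fun s _ => walkWeight_nonneg hκ a e s

lemma Z1_le {κ : ℝ} (hκ : 0 ≤ κ) (t : ℕ) (a e : ℤ) :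
    Z1 t a e κ ≤ (κ + 1) ^ (t + 1) * 2 ^ t := by
  rw [Z1_eq_sum_walkWeight]
  calc ∑ s : Fin t → Bool, walkWeight a e κ s
        ≤ ∑ _s : Fin t → Bool, (κ + 1) ^ (t + 1) :=
        Finset.sum_le_sum fun s _ => walkWeight_le hκ a e s
    _ = (κ + 1) ^ (t + 1) * 2 ^ t := by simp [mul_comm]

end PartitionFunction

section GeneratingFunction

variable {κ z : ℝ} (hκ : 0 ≤ κ) (hz : 0 ≤ z) (hκz : 2 * (κ + 1) * z < 1)
include hκ hz

lemma Z1_mul_pow_le (t : ℕ) (a e : ℤ) :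
    Z1 t a e κ * z ^ t ≤ (κ + 1) * (2 * (κ + 1) * z) ^ t :=
  calc Z1 t a e κ * z ^ t ≤ (κ + 1) ^ (t + 1) * 2 ^ t * z ^ t := by
        gcongr
        exact Z1_le hκ t a e
    _ = (κ + 1) * (2 * (κ + 1) * z) ^ t := by rw [mul_pow, mul_pow, pow_succ]; ring

include hκz

lemma summable_Z1_mul_pow (a e : ℤ) : Summable fun t => Z1 t a e κ * z ^ t :=
  .of_nonneg_of_le (fun t => mul_nonneg (Z1_nonneg hκ t a e) (pow_nonneg hz t))
    (fun t => Z1_mul_pow_le hκ hz t a e)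
    ((summable_geometric_of_lt_one (by positivity) hκz).mul_left _)

lemma abs_tsum_Z1_mul_pow_le (a e : ℤ) :
    |∑' t, Z1 t a e κ * z ^ t| ≤ (κ + 1) * (1 - 2 * (κ + 1) * z)⁻¹ := by
  rw [abs_of_nonneg (tsum_nonneg fun t => mul_nonneg (Z1_nonneg hκ t a e) (pow_nonneg hz t)),
    ← tsum_geometric_of_lt_one (by positivity) hκz, ← tsum_mul_left]
  exact (summable_Z1_mul_pow hκ hz hκz a e).tsum_le_tsum (Z1_mul_pow_le hκ hz · a e)
    ((summable_geometric_of_lt_one (by positivity) hκz).mul_left _)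

lemma tsum_Z1_mul_pow {a : ℤ} (ha : 0 ≤ a) (e : ℤ) :
    ∑' t, Z1 t a e κ * z ^ t = κ ^ (if a = 0 then 1 else 0) * ((if a = e then 1 else 0) +
      z * (∑' t, Z1 t (a + 1) e κ * z ^ t + ∑' t, Z1 t (a - 1) e κ * z ^ t)) := by
  have hsucc (t : ℕ) : Z1 (t + 1) a e κ * z ^ (t + 1) = κ ^ (if a = 0 then 1 else 0) *
      (z * (Z1 t (a + 1) e κ * z ^ t) + z * (Z1 t (a - 1) e κ * z ^ t)) := by
    rw [Z1_succ ha]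
    ring
  rw [(summable_Z1_mul_pow hκ hz hκz a e).tsum_eq_zero_add, tsum_congr hsucc, tsum_mul_left,
    ((summable_Z1_mul_pow hκ hz hκz _ e).mul_left z).tsum_add
      ((summable_Z1_mul_pow hκ hz hκz _ e).mul_left z), tsum_mul_left, tsum_mul_left, Z1_zero]
  split_ifs <;> first | (exfalso; omega) | ring

end GeneratingFunction

-- With `Q = √(1-4z²)`, `B = (1-Q)/(2z)` and `U = 2κ/((2-κ)+κQ)` this is the right-hand side
-- of the theorem for the start `(0, b)`.
noncomputable def gfClosedForm (e : ℕ) (B Q U : ℝ) (b : ℕ) : ℝ :=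
  B ^ ((e : ℤ) - b).natAbs / Q - B ^ (e + b) / Q + B ^ (e + b) * U

section ClosedForm

variable {z B Q U : ℝ}

lemma pow_succ_eq_of_mul_sq_eq (hB : z * B ^ 2 = B - z) (k : ℕ) :
    B ^ (k + 1) = z * (B ^ k + B ^ (k + 2)) := by
  linear_combination (-B ^ k) * hB

lemma pow_natAbs_sub_succ (hB : z * B ^ 2 = B - z) (e b : ℕ) :
    B ^ ((e : ℤ) - (b + 1 : ℕ)).natAbs = (if b + 1 = e then 1 - 2 * z * B else 0) +
      z * (B ^ ((e : ℤ) - b).natAbs + B ^ ((e : ℤ) - (b + 2 : ℕ)).natAbs) := by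
  rcases lt_trichotomy (b + 1) e with hlt | rfl | hgt
  · obtain ⟨m, rfl⟩ : ∃ m, e = b + 2 + m := ⟨e - (b + 2), by omega⟩
    rw [if_neg (by omega), show ((b + 2 + m : ℕ) - (b + 1 : ℕ) : ℤ).natAbs = m + 1 by omega,
      show ((b + 2 + m : ℕ) - b : ℤ).natAbs = m + 2 by omega,
      show ((b + 2 + m : ℕ) - (b + 2 : ℕ) : ℤ).natAbs = m by omega,
      pow_succ_eq_of_mul_sq_eq hB]
    ring
  · rw [if_pos rfl, show ((b + 1 : ℕ) - (b + 1 : ℕ) : ℤ).natAbs = 0 by omega,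
      show ((b + 1 : ℕ) - b : ℤ).natAbs = 1 by omega,
      show ((b + 1 : ℕ) - (b + 2 : ℕ) : ℤ).natAbs = 1 by omega]
    ring
  · obtain ⟨k, rfl⟩ : ∃ k, b = e + k := ⟨b - e, by omega⟩
    rw [if_neg (by omega), show ((e : ℤ) - (e + k + 1 : ℕ)).natAbs = k + 1 by omega,
      show ((e : ℤ) - (e + k : ℕ)).natAbs = k by omega,
      show ((e : ℤ) - (e + k + 2 : ℕ)).natAbs = k + 2 by omega,
      pow_succ_eq_of_mul_sq_eq hB, zero_add]

lemma gfClosedForm_succ (hB : z * B ^ 2 = B - z) (hQ : Q ≠ 0) (hQB : 1 - 2 * z * B = Q)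
    (e b : ℕ) :
    gfClosedForm e B Q U (b + 1) = (if b + 1 = e then 1 else 0) +
      z * (gfClosedForm e B Q U b + gfClosedForm e B Q U (b + 2)) := by
  have hpow : B ^ (e + (b + 1)) = z * (B ^ (e + b) + B ^ (e + (b + 2))) :=
    pow_succ_eq_of_mul_sq_eq hB (e + b)
  subst hQB
  rw [gfClosedForm, gfClosedForm, gfClosedForm, pow_natAbs_sub_succ hB, hpow]
  split_ifs
  · field_simp
    ring
  · ring

lemma gfClosedForm_zero {κ : ℝ} (hB : z * B ^ 2 = B - z) (hQ : Q ≠ 0)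
    (hQB : 1 - 2 * z * B = Q) (hU : U * (1 - κ * z * B) = κ) (e : ℕ) :
    gfClosedForm e B Q U 0 = (if 0 = e then κ else 0) + κ * z * gfClosedForm e B Q U 1 := by
  rcases e with _ | k
  · simp only [gfClosedForm]
    norm_num
    linear_combination hU
  · simp only [gfClosedForm, if_neg (Nat.succ_ne_zero k).symm,
      show ((k + 1 : ℕ) - (0 : ℕ) : ℤ).natAbs = k + 1 by omega,
      show ((k + 1 : ℕ) - (1 : ℕ) : ℤ).natAbs = k by omega]
    field_simp
    linear_combination Q * B ^ (k + 1) * hU - κ * B ^ k * hB - κ * B ^ (k + 1) * hQB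

lemma abs_gfClosedForm_le (hQ : 0 < Q) (hB0 : 0 ≤ B) (hB1 : B ≤ 1) (hU : 0 ≤ U) (e b : ℕ) :
    |gfClosedForm e B Q U b| ≤ 2 / Q + U := by
  have hpow (n : ℕ) : B ^ n ≤ 1 := pow_le_one₀ hB0 hB1
  have hdiv (n : ℕ) : |B ^ n / Q| ≤ 1 / Q := by
    rw [abs_of_nonneg (by positivity)]
    gcongr
    exact hpow n
  calc |gfClosedForm e B Q U b|
      ≤ |B ^ ((e : ℤ) - b).natAbs / Q| + |B ^ (e + b) / Q| + |B ^ (e + b) * U| :=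
        (abs_add_le _ _).trans (by gcongr; exact abs_sub _ _)
    _ ≤ 1 / Q + 1 / Q + 1 * U := by
        rw [abs_of_nonneg (by positivity : 0 ≤ B ^ (e + b) * U)]
        gcongr
        exacts [hdiv _, hdiv _, hpow _]
    _ = 2 / Q + U := by ring

end ClosedForm

lemma eq_zero_of_abs_le_of_recurrence {D : ℕ → ℝ} {z c K : ℝ} (hK : ∀ b, |D b| ≤ K)
    (hz : 0 ≤ z) (h2z : 2 * z < 1) (hc : |c| < 1) (hD0 : D 0 = c * D 1)
    (hD : ∀ b, D (b + 1) = z * (D b + D (b + 2))) (b : ℕ) : D b = 0 := by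
  set r := max (2 * z) |c|
  have hr0 : 0 ≤ r := le_max_of_le_right (abs_nonneg c)
  have hcontract : ∀ n b, |D b| ≤ r ^ n * K := by
    intro n
    induction n with
    | zero => simpa using hK
    | succ n ih =>
      rintro (_ | b)
      · calc |D 0| = |c| * |D 1| := by rw [hD0, abs_mul]
          _ ≤ r * (r ^ n * K) := by gcongr; exacts [le_max_right _ _, ih 1]
          _ = r ^ (n + 1) * K := by ring
      · calc |D (b + 1)| ≤ z * (|D b| + |D (b + 2)|) := by
              rw [hD, abs_mul, abs_of_nonneg hz]; gcongr; exact abs_add_le _ _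
          _ ≤ z * (r ^ n * K + r ^ n * K) := by gcongr; exacts [ih b, ih (b + 2)]
          _ = 2 * z * (r ^ n * K) := by ring
          _ ≤ r * (r ^ n * K) := by
              gcongr
              · exact (abs_nonneg _).trans (ih 0)
              · exact le_max_left _ _
          _ = r ^ (n + 1) * K := by ring
  have hlim := (tendsto_pow_atTop_nhds_zero_of_lt_one hr0 (max_lt h2z hc)).mul_const K
  rw [zero_mul] at hlim
  exact abs_nonpos_iff.1 (ge_of_tendsto' hlim (hcontract · b))

lemma sqrt_one_sub_four_mul_sq_root_spec {z Q B : ℝ} (hz : 0 < z) (h2z : 2 * z < 1)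
    (hQ : Q = √(1 - 4 * z ^ 2)) (hB : B = (1 - Q) / (2 * z)) :
    0 < Q ∧ 1 - 2 * z * B = Q ∧ z * B ^ 2 = B - z ∧ 0 ≤ B ∧ B ≤ 1 := by
  have hQsq : Q ^ 2 = 1 - 4 * z ^ 2 := by rw [hQ, Real.sq_sqrt (by nlinarith)]
  have hQpos : 0 < Q := hQ ▸ Real.sqrt_pos.2 (by nlinarith)
  have hzB : 2 * z * B = 1 - Q := by rw [hB]; field_simp
  have hQ1 : Q ≤ 1 := by nlinarith
  refine ⟨hQpos, by linarith, ?_, ?_, ?_⟩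
  · have h4z : 4 * z * (z * B ^ 2 - (B - z)) = 0 := by
      linear_combination (2 * z * B + 1 - Q - 2) * hzB + hQsq
    simpa [hz.ne', sub_eq_zero] using h4z
  · nlinarith
  · nlinarith

theorem tsum_Z1_mul_pow_eq_gfClosedForm {κ z B Q U : ℝ} (hκ : 0 ≤ κ) (hz : 0 ≤ z)
    (hκz : 2 * (κ + 1) * z < 1) (hQ : 0 < Q) (hQB : 1 - 2 * z * B = Q) (hB : z * B ^ 2 = B - z)
    (hB0 : 0 ≤ B) (hB1 : B ≤ 1) (hU0 : 0 ≤ U) (hU : U * (1 - κ * z * B) = κ) (e b : ℕ) :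
    ∑' t, Z1 t b e κ * z ^ t = gfClosedForm e B Q U b := by
  set S : ℕ → ℝ := fun b => ∑' t, Z1 t b e κ * z ^ t
  have hS0 : S 0 = (if 0 = e then κ else 0) + κ * z * S 1 := by
    have h := tsum_Z1_mul_pow hκ hz hκz le_rfl (e : ℤ)
    simp only [Z1_of_neg (show (0 : ℤ) - 1 < 0 by norm_num), zero_mul, tsum_zero, add_zero] at h
    simp only [S, Nat.cast_zero, h, if_true, pow_one, zero_add, Nat.cast_one]
    split_ifs <;> first | (exfalso; omega) | ring
  have hS (b : ℕ) : S (b + 1) = (if b + 1 = e then 1 else 0) + z * (S b + S (b + 2)) := by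
    have h := tsum_Z1_mul_pow hκ hz hκz (show (0 : ℤ) ≤ (b + 1 : ℕ) by positivity) (e : ℤ)
    have hsucc : ((b + 1 : ℕ) : ℤ) + 1 = (b + 2 : ℕ) := by push_cast; ring
    have hpred : ((b + 1 : ℕ) : ℤ) - 1 = b := by push_cast; ring
    simp only [S, h, hsucc, hpred, Nat.cast_inj, if_neg (by omega : ((b + 1 : ℕ) : ℤ) ≠ 0),
      pow_zero, one_mul]
    ring
  refine sub_eq_zero.1 (eq_zero_of_abs_le_of_recurrence (D := fun b => S b - gfClosedForm e B Q U b)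
    (c := κ * z)
    (fun b => (abs_sub _ _).trans (add_le_add (abs_tsum_Z1_mul_pow_le hκ hz hκz _ _)
      (abs_gfClosedForm_le hQ hB0 hB1 hU0 e b))) hz (by nlinarith)
    (by rw [abs_of_nonneg (mul_nonneg hκ hz)]; nlinarith) ?_ ?_ b)
  · simp only [hS0, gfClosedForm_zero hB hQ.ne' hQB hU]
    ring
  · intro b
    rw [hS, gfClosedForm_succ hB hQ.ne' hQB]
    ring

/-- generating function of the single-walker partition functions. -/
theorem statement1 (a e : ℕ) (κ : ℝ) (hκ : 0 < κ) :
    ∃ δ > (0 : ℝ), ∀ z : ℝ, 0 < z → z < δ →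
      Summable (fun t : ℕ =>
        if t % 2 = (a + e) % 2 then Z1 t a e κ * z ^ t else 0) ∧
      (∑' t : ℕ, (if t % 2 = (a + e) % 2 then Z1 t a e κ * z ^ t else 0)) =
        (1 / Real.sqrt (1 - 4 * z ^ 2)) *
            ((1 - Real.sqrt (1 - 4 * z ^ 2)) / (2 * z)) ^ (((e : ℤ) - (a : ℤ)).natAbs) -
          (1 / Real.sqrt (1 - 4 * z ^ 2)) *
            ((1 - Real.sqrt (1 - 4 * z ^ 2)) / (2 * z)) ^ (e + a) *
            (1 - 2 * κ * Real.sqrt (1 - 4 * z ^ 2) /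
                ((2 - κ) + κ * Real.sqrt (1 - 4 * z ^ 2))) := by
  refine ⟨1 / (2 * (κ + 1)), by positivity, fun z hz hzδ => ?_⟩
  have hκz : 2 * (κ + 1) * z < 1 := (lt_div_iff₀' (by positivity)).1 hzδ
  set Q := √(1 - 4 * z ^ 2)
  set B := (1 - Q) / (2 * z)
  obtain ⟨hQ, hQB, hB, hB0, hB1⟩ :=
    sqrt_one_sub_four_mul_sq_root_spec (Q := Q) (B := B) hz (by nlinarith) rfl rfl
  have hden : (2 - κ) + κ * Q = 2 * (1 - κ * z * B) := by linear_combination -κ * hQB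
  have hκzB : 0 < 1 - κ * z * B := by
    nlinarith [mul_le_mul_of_nonneg_left hB1 (by positivity : 0 ≤ κ * z)]
  have hparity : (fun t : ℕ => if t % 2 = (a + e) % 2 then Z1 t a e κ * z ^ t else 0) =
      fun t => Z1 t a e κ * z ^ t := by
    funext t
    split_ifs with h
    · rfl
    · rw [Z1_eq_zero_of_odd (by rw [Int.odd_iff]; omega), zero_mul]
  rw [hparity, tsum_Z1_mul_pow_eq_gfClosedForm hκ.le hz.le hκz hQ hQB hB hB0 hB1
    (U := 2 * κ / ((2 - κ) + κ * Q)) (by rw [hden]; positivity) (by rw [hden]; field_simp),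
    gfClosedForm]
  refine ⟨summable_Z1_mul_pow hκ.le hz.le hκz a e, ?_⟩
  rw [hden]
  field_simp
  ring
end

section
/- Let n ≥ 1, let t be a non-negative integer, and let a = (a₁,…,aₙ) and e = (e₁,…,eₙ) be tuples of non-negative integers with 0 ≤ a₁ < a₂ < … < aₙ, 0 ≤ e₁ < e₂ < … < eₙ, all aᵢ of the same parity, all eᵢ of the same parity, and aᵢ + eᵢ ≡ t (mod 2) for all i. Then for every κ > 0, Z⁽ⁿ⁾_t(a→e;κ) = det_{1≤i,j≤n}( Z⁽¹⁾_t(a_j→e_i;κ) ). -/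
open Finset

/-!
Expanding the determinant gives a signed sum over pairs `(σ, P)`, where `P` is a family of
walks whose `k`-th walk runs from `a k` to `e (σ k)`, weighted by `κ ^ (number of contacts)`.
On the pairs in which two walks meet, exchanging the tails of a meeting pair after the first
meeting time is a sign-reversing involution; it preserves the number of contacts because at
every time it only permutes the heights of the walks, so these terms cancel. In a family
without meetings two walks can never change their order (walks of the same parity that do
so must meet), hence `σ = 1`, and the surviving terms are the families of vicious walkers.
-/

namespace ViciousWalkers

open Equiv Function

section SingleWalk

variable {t : ℕ}

def step (s : Fin t → Bool) (l : ℕ) : ℤ :=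
  if h : l < t then (if s ⟨l, h⟩ then 1 else -1) else 0

lemma ht_zero (a : ℤ) (s : Fin t → Bool) : ht a s 0 = a := by
  simp [ht]

lemma ht_succ (a : ℤ) (s : Fin t → Bool) (m : ℕ) : ht a s (m + 1) = ht a s m + step s m := by
  simp only [ht, step, Finset.sum_range_succ, add_assoc]

lemma step_eq_one_or_neg_one (s : Fin t → Bool) {l : ℕ} (hl : l < t) :
    step s l = 1 ∨ step s l = -1 := by
  unfold step
  rw [dif_pos hl]
  split <;> simp

lemma ht_emod_two (a : ℤ) (s : Fin t → Bool) {m : ℕ} (hm : m ≤ t) :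
    ht a s m % 2 = (a + m) % 2 := by
  induction m with
  | zero => simp [ht_zero]
  | succ m ih =>
    have := ih (by omega)
    rcases step_eq_one_or_neg_one s (show m < t by omega) with h | h <;>
      rw [ht_succ, h] <;> push_cast <;> omega

lemma ht_eq_of_step_eq {a a' : ℤ} {s s' : Fin t → Bool} {m m' : ℕ} (hm : m ≤ m')
    (h₀ : ht a s m = ht a' s' m) (hs : ∀ l, m ≤ l → l < m' → step s l = step s' l) :
    ht a s m' = ht a' s' m' := by
  induction m', hm using Nat.le_induction with
  | base => exact h₀
  | succ k hk ih =>
    rw [ht_succ, ht_succ, ih fun l h₁ h₂ => hs l h₁ (by omega), hs k hk (by omega)]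

lemma exists_eq_zero_of_abs_sub_le_one {f : ℕ → ℤ} {T : ℕ}
    (hf : ∀ m < T, |f (m + 1) - f m| ≤ 1) (h₀ : f 0 ≤ 0) (hT : 0 ≤ f T) :
    ∃ m ≤ T, f m = 0 := by
  induction T with
  | zero => exact ⟨0, le_rfl, by omega⟩
  | succ T ih =>
    by_cases hz : f (T + 1) = 0
    · exact ⟨T + 1, le_rfl, hz⟩
    · have hstep := abs_le.1 (hf T (by omega))
      obtain ⟨m, hm, hfm⟩ := ih (fun m hm => hf m (by omega)) (by omega)
      exact ⟨m, by omega, hfm⟩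

lemma exists_ht_eq_of_lt_of_gt {a b : ℤ} {s r : Fin t → Bool} (hpar : a % 2 = b % 2)
    (h₀ : a < b) (hT : ht b r t < ht a s t) : ∃ m ≤ t, ht a s m = ht b r m := by
  -- the walks have the same parity, so half the gap between them moves by at most one per step
  have hgap : ∀ m < t,
      |(ht a s (m + 1) - ht b r (m + 1)) / 2 - (ht a s m - ht b r m) / 2| ≤ 1 := by
    intro m hm
    have := ht_emod_two a s hm.le
    have := ht_emod_two b r hm.le
    rw [abs_le, ht_succ, ht_succ]
    rcases step_eq_one_or_neg_one s hm with h | h <;>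
      rcases step_eq_one_or_neg_one r hm with h' | h' <;> rw [h, h'] <;> omega
  obtain ⟨m, hm, hzero⟩ :=
    exists_eq_zero_of_abs_sub_le_one (f := fun m => (ht a s m - ht b r m) / 2) hgap
      (by simp only [ht_zero]; omega) (by omega)
  have := ht_emod_two a s hm
  have := ht_emod_two b r hm
  exact ⟨m, hm, by omega⟩

end SingleWalk

section Families

variable {n t : ℕ} (A : Fin n → ℤ)

def heights (P : Fin n → Fin t → Bool) (m : ℕ) : Fin n → ℤ :=
  fun k => ht (A k) (P k) m

def Collides (P : Fin n → Fin t → Bool) : Prop :=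
  ∃ m ≤ t, ¬Injective (heights A P m)

open Classical in
noncomputable def firstCollision {P : Fin n → Fin t → Bool} (h : Collides A P) : ℕ :=
  Nat.find h

lemma firstCollision_spec {P : Fin n → Fin t → Bool} (h : Collides A P) :
    firstCollision A h ≤ t ∧ ¬Injective (heights A P (firstCollision A h)) := by
  classical
  exact Nat.find_spec h

lemma firstCollision_eq {P Q : Fin n → Fin t → Bool} (hP : Collides A P) (hQ : Collides A Q)
    (hPQ : ∀ m ≤ firstCollision A hP, heights A Q m = heights A P m) :
    firstCollision A hQ = firstCollision A hP := by
  classical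
  refine (Nat.find_eq_iff (p := fun m => m ≤ t ∧ ¬Injective (heights A Q m)) hQ).2
    ⟨?_, fun m hm => ?_⟩
  · rw [hPQ _ le_rfl]
    exact Nat.find_spec hP
  · rw [hPQ m hm.le]
    exact Nat.find_min hP hm

end Families

section CollidingPair

variable {α β : Type*}

noncomputable def collidingPair (f : α → β) (hf : ¬Injective f) : α × α :=
  ((not_injective_iff.1 hf).choose, (not_injective_iff.1 hf).choose_spec.choose)

lemma collidingPair_spec (f : α → β) (hf : ¬Injective f) :
    f (collidingPair f hf).1 = f (collidingPair f hf).2 ∧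
      (collidingPair f hf).1 ≠ (collidingPair f hf).2 :=
  (not_injective_iff.1 hf).choose_spec.choose_spec

lemma collidingPair_congr {f g : α → β} (hfg : f = g) (hf : ¬Injective f)
    (hg : ¬Injective g) :
    collidingPair f hf = collidingPair g hg := by
  subst hfg
  rfl

lemma comp_swap_of_apply_eq [DecidableEq α] {f : α → β} {i j : α} (h : f i = f j) :
    f ∘ swap i j = f := by
  funext k
  simp only [comp_apply, swap_apply_def]
  split_ifs <;> simp_all

end CollidingPair

section TailSwap

variable {n t : ℕ} (A : Fin n → ℤ)

def swapTails (i j : Fin n) (m₀ : ℕ) (P : Fin n → Fin t → Bool) :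
    Fin n → Fin t → Bool :=
  fun k l => if (l : ℕ) < m₀ then P k l else P (swap i j k) l

lemma swapTails_swapTails (i j : Fin n) (m₀ : ℕ) (P : Fin n → Fin t → Bool) :
    swapTails i j m₀ (swapTails i j m₀ P) = P := by
  funext k l
  by_cases hl : (l : ℕ) < m₀ <;> simp [swapTails, hl]

lemma step_swapTails_of_lt {i j : Fin n} {m₀ l : ℕ} (P : Fin n → Fin t → Bool) (k : Fin n)
    (hl : l < m₀) : step (swapTails i j m₀ P k) l = step (P k) l := by
  unfold step swapTails
  split <;> simp_all

lemma step_swapTails_of_le {i j : Fin n} {m₀ l : ℕ} (P : Fin n → Fin t → Bool) (k : Fin n)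
    (hl : m₀ ≤ l) : step (swapTails i j m₀ P k) l = step (P (swap i j k)) l := by
  unfold step swapTails
  split <;> simp [Nat.not_lt.2 hl]

lemma heights_swapTails_of_le {i j : Fin n} {m₀ m : ℕ} (P : Fin n → Fin t → Bool)
    (hm : m ≤ m₀) : heights A (swapTails i j m₀ P) m = heights A P m :=
  funext fun k => ht_eq_of_step_eq (Nat.zero_le m) (by rw [ht_zero, ht_zero])
    fun _ _ hl => step_swapTails_of_lt P k (by omega)

lemma heights_swapTails_of_ge {i j : Fin n} {m₀ m : ℕ} {P : Fin n → Fin t → Bool}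
    (hij : heights A P m₀ i = heights A P m₀ j) (hm : m₀ ≤ m) :
    heights A (swapTails i j m₀ P) m = heights A P m ∘ swap i j := by
  have h₀ : heights A (swapTails i j m₀ P) m₀ = heights A P m₀ ∘ swap i j := by
    rw [heights_swapTails_of_le A P le_rfl, comp_swap_of_apply_eq hij]
  exact funext fun k => ht_eq_of_step_eq hm (congrFun h₀ k)
    fun _ hl _ => step_swapTails_of_le P k hl

def contactNumber (P : Fin n → Fin t → Bool) : ℕ :=
  ∑ k, contacts (A k) (P k)

lemma contactNumber_eq_sum_heights (P : Fin n → Fin t → Bool) :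
    contactNumber A P =
      ∑ m ∈ Finset.range (t + 1), ∑ k, if heights A P m k = 0 then 1 else 0 := by
  rw [Finset.sum_comm]
  exact Finset.sum_congr rfl fun k _ => Finset.card_filter _ _

lemma contactNumber_eq_of_heights_eq_comp {P Q : Fin n → Fin t → Bool}
    (h : ∀ m, ∃ τ : Perm (Fin n), heights A Q m = heights A P m ∘ τ) :
    contactNumber A Q = contactNumber A P := by
  rw [contactNumber_eq_sum_heights, contactNumber_eq_sum_heights]
  refine Finset.sum_congr rfl fun m _ => ?_
  obtain ⟨τ, hτ⟩ := h m
  rw [hτ]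
  exact Equiv.sum_comp τ fun k => if heights A P m k = 0 then 1 else 0

end TailSwap

section FirstCollision

variable {n t : ℕ} (A : Fin n → ℤ) {P : Fin n → Fin t → Bool}

-- The pair is read off the heights at the first collision alone, which the tail swap does not
-- change; this is what makes the swap an involution.
noncomputable def firstCollidingPair (h : Collides A P) : Fin n × Fin n :=
  collidingPair (heights A P (firstCollision A h)) (firstCollision_spec A h).2

lemma firstCollidingPair_fst_ne_snd (h : Collides A P) :
    (firstCollidingPair A h).1 ≠ (firstCollidingPair A h).2 :=
  (collidingPair_spec _ _).2

noncomputable def swapAtFirstCollision (h : Collides A P) : Fin n → Fin t → Bool :=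
  swapTails (firstCollidingPair A h).1 (firstCollidingPair A h).2 (firstCollision A h) P

lemma heights_swapAtFirstCollision_of_le (h : Collides A P) {m : ℕ}
    (hm : m ≤ firstCollision A h) : heights A (swapAtFirstCollision A h) m = heights A P m :=
  heights_swapTails_of_le A P hm

lemma heights_swapAtFirstCollision_of_ge (h : Collides A P) {m : ℕ}
    (hm : firstCollision A h ≤ m) :
    heights A (swapAtFirstCollision A h) m =
      heights A P m ∘ swap (firstCollidingPair A h).1 (firstCollidingPair A h).2 :=
  heights_swapTails_of_ge A (collidingPair_spec _ _).1 hm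

lemma collides_swapAtFirstCollision (h : Collides A P) :
    Collides A (swapAtFirstCollision A h) :=
  ⟨firstCollision A h, (firstCollision_spec A h).1, by
    rw [heights_swapAtFirstCollision_of_le A h le_rfl]
    exact (firstCollision_spec A h).2⟩

lemma firstCollision_swapAtFirstCollision (h : Collides A P)
    (h' : Collides A (swapAtFirstCollision A h)) :
    firstCollision A h' = firstCollision A h :=
  firstCollision_eq A h h' fun _ => heights_swapAtFirstCollision_of_le A h

lemma firstCollidingPair_swapAtFirstCollision (h : Collides A P)
    (h' : Collides A (swapAtFirstCollision A h)) :
    firstCollidingPair A h' = firstCollidingPair A h :=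
  collidingPair_congr (by
    rw [firstCollision_swapAtFirstCollision A h h', heights_swapAtFirstCollision_of_le A h le_rfl])
    _ _

lemma swapAtFirstCollision_swapAtFirstCollision (h : Collides A P)
    (h' : Collides A (swapAtFirstCollision A h)) :
    swapAtFirstCollision A h' = P := by
  rw [swapAtFirstCollision, firstCollidingPair_swapAtFirstCollision A h h',
    firstCollision_swapAtFirstCollision A h h']
  exact swapTails_swapTails _ _ _ P

lemma contactNumber_swapAtFirstCollision (h : Collides A P) :
    contactNumber A (swapAtFirstCollision A h) = contactNumber A P :=
  contactNumber_eq_of_heights_eq_comp A fun m => (le_total m (firstCollision A h)).elim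
    (fun hm => ⟨1, heights_swapAtFirstCollision_of_le A h hm⟩)
    (fun hm => ⟨_, heights_swapAtFirstCollision_of_ge A h hm⟩)

end FirstCollision

section Determinant

variable {n t : ℕ}

open Classical in
noncomputable def walksBetween (t : ℕ) (a e : ℤ) : Finset (Fin t → Bool) :=
  Finset.univ.filter (WalkOK a e)

lemma Z1_eq_sum_walksBetween (t : ℕ) (a e : ℤ) (κ : ℝ) :
    Z1 t a e κ = ∑ s ∈ walksBetween t a e, κ ^ contacts a s := by
  rw [Z1, Zpart, Zgen]
  refine Finset.sum_nbij' (fun P => P 0) (fun s _ => s) ?_ ?_ ?_ ?_ ?_ <;>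
    simp [walksBetween, FamilyOK, Subsingleton.elim _ (0 : Fin 1), funext_iff]

open Classical in
noncomputable def admissible (t : ℕ) (A E : Fin n → ℤ) :
    Finset (Perm (Fin n) × (Fin n → Fin t → Bool)) :=
  Finset.univ.filter fun p => ∀ k, WalkOK (A k) (E (p.1 k)) (p.2 k)

lemma mem_admissible {A E : Fin n → ℤ} {p : Perm (Fin n) × (Fin n → Fin t → Bool)} :
    p ∈ admissible t A E ↔ ∀ k, WalkOK (A k) (E (p.1 k)) (p.2 k) := by
  simp [admissible]

lemma det_eq_sum_admissible (A E : Fin n → ℤ) (κ : ℝ) :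
    (Matrix.of fun i j : Fin n => Z1 t (A j) (E i) κ).det =
      ∑ p ∈ admissible t A E, ((Perm.sign p.1 : ℤ) : ℝ) * κ ^ contactNumber A p.2 := by
  rw [Matrix.det_apply', Finset.sum_finset_product (admissible t A E) Finset.univ
    (fun σ => Fintype.piFinset fun k => walksBetween t (A k) (E (σ k)))
    (by simp [mem_admissible, walksBetween])]
  refine Finset.sum_congr rfl fun σ _ => ?_
  simp only [Matrix.of_apply, Z1_eq_sum_walksBetween, Finset.prod_univ_sum, Finset.mul_sum,
    contactNumber, Finset.prod_pow_eq_pow_sum]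

lemma familyOK_iff {A E : Fin n → ℤ} {P : Fin n → Fin t → Bool} :
    FamilyOK (fun _ => t) A E P ↔ (∀ k, WalkOK (A k) (E k) (P k)) ∧ ¬Collides A P := by
  simp only [FamilyOK, Collides, not_exists, not_and, not_not, Injective, heights]
  exact and_congr_right fun _ =>
    ⟨fun h m hm i j hij => by_contra fun hne => h i j hne m hm hm hij,
      fun h i j hne m hm _ hij => hne (h m hm hij)⟩

lemma perm_eq_one_of_not_collides {A E : Fin n → ℤ} (hA : StrictMono A) (hE : StrictMono E)
    (hpar : ∀ i j, A i % 2 = A j % 2) {p : Perm (Fin n) × (Fin n → Fin t → Bool)}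
    (hp : p ∈ admissible t A E) (hc : ¬Collides A p.2) : p.1 = 1 := by
  have hmono : StrictMono p.1 := by
    intro i j hij
    by_contra hle
    have hlt : p.1 j < p.1 i := lt_of_le_of_ne (not_lt.1 hle) (p.1.injective.ne hij.ne')
    obtain ⟨m, hm, hmeet⟩ := exists_ht_eq_of_lt_of_gt (hpar i j) (hA hij) (by
      rw [(mem_admissible.1 hp i).1, (mem_admissible.1 hp j).1]
      exact hE hlt)
    exact hc ⟨m, hm, fun hinj => hij.ne (hinj hmeet)⟩
  exact Equiv.ext fun k => congrFun hmono.eq_id k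

open Classical in
lemma Zpart_eq_sum_not_collides {A E : Fin n → ℤ} (hA : StrictMono A) (hE : StrictMono E)
    (hpar : ∀ i j, A i % 2 = A j % 2) (κ : ℝ) :
    Zpart n t A E κ = ∑ p ∈ (admissible t A E).filter (fun p => ¬Collides A p.2),
      ((Perm.sign p.1 : ℤ) : ℝ) * κ ^ contactNumber A p.2 := by
  rw [Zpart, Zgen]
  have hσ : ∀ p ∈ (admissible t A E).filter (fun p => ¬Collides A p.2), p = (1, p.2) :=
    fun p hp => Prod.ext (perm_eq_one_of_not_collides hA hE hpar
      (Finset.mem_filter.1 hp).1 (Finset.mem_filter.1 hp).2) rfl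
  refine Finset.sum_nbij' (fun P => (1, P)) Prod.snd ?_ ?_ (fun _ _ => rfl)
    (fun p hp => (hσ p hp).symm) ?_
  · intro P hP
    simpa [familyOK_iff, mem_admissible] using hP
  · intro p hp
    rw [hσ p hp] at hp
    simpa [familyOK_iff, mem_admissible] using hp
  · intro P _
    simp [contactNumber]

lemma mem_admissible_swapAtFirstCollision {A E : Fin n → ℤ}
    {p : Perm (Fin n) × (Fin n → Fin t → Bool)} (hp : p ∈ admissible t A E)
    (h : Collides A p.2) :
    (p.1 * swap (firstCollidingPair A h).1 (firstCollidingPair A h).2, swapAtFirstCollision A h) ∈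
      admissible t A E := by
  rw [mem_admissible] at hp ⊢
  intro k
  refine ⟨(congrFun (heights_swapAtFirstCollision_of_ge A h (firstCollision_spec A h).1) k).trans
    (hp _).1, fun m hm => ?_⟩
  rcases le_total m (firstCollision A h) with hm' | hm'
  · exact (congrFun (heights_swapAtFirstCollision_of_le A h hm') k).trans_ge ((hp _).2 m hm)
  · exact (congrFun (heights_swapAtFirstCollision_of_ge A h hm') k).trans_ge ((hp _).2 m hm)

open Classical in
lemma sum_collides_eq_zero (A E : Fin n → ℤ) (κ : ℝ) :
    ∑ p ∈ (admissible t A E).filter (fun p => Collides A p.2),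
      ((Perm.sign p.1 : ℤ) : ℝ) * κ ^ contactNumber A p.2 = 0 := by
  refine Finset.sum_involution (fun p hp =>
    (p.1 * swap (firstCollidingPair A (Finset.mem_filter.1 hp).2).1
      (firstCollidingPair A (Finset.mem_filter.1 hp).2).2,
      swapAtFirstCollision A (Finset.mem_filter.1 hp).2)) ?_ ?_ ?_ ?_
  · intro p hp
    rw [contactNumber_swapAtFirstCollision, Perm.sign_mul,
      Perm.sign_swap (firstCollidingPair_fst_ne_snd A _)]
    push_cast
    ring
  · intro p hp _ hfix
    exact firstCollidingPair_fst_ne_snd A _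
      (swap_eq_one_iff.1 (mul_eq_left.1 (congrArg Prod.fst hfix)))
  · intro p hp
    exact Finset.mem_filter.2 ⟨mem_admissible_swapAtFirstCollision (Finset.mem_filter.1 hp).1 _,
      collides_swapAtFirstCollision A _⟩
  · intro p hp
    refine Prod.ext ?_ ?_
    · simp only
      rw [firstCollidingPair_swapAtFirstCollision, mul_assoc, swap_mul_self, mul_one]
    · exact swapAtFirstCollision_swapAtFirstCollision A _ _

theorem Zpart_eq_det {A E : Fin n → ℤ} (hA : StrictMono A) (hE : StrictMono E)
    (hpar : ∀ i j, A i % 2 = A j % 2) (κ : ℝ) :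
    Zpart n t A E κ = (Matrix.of fun i j : Fin n => Z1 t (A j) (E i) κ).det := by
  classical
  rw [det_eq_sum_admissible, ← Finset.sum_filter_not_add_sum_filter _ (fun p => Collides A p.2),
    sum_collides_eq_zero, add_zero, Zpart_eq_sum_not_collides hA hE hpar]

end Determinant

end ViciousWalkers

theorem statement2_general (n t : ℕ) (a e : Fin n → ℕ)
    (ha : StrictMono a) (he : StrictMono e)
    (hapar : ∀ i j, a i % 2 = a j % 2) (κ : ℝ) :
    Zpart n t (fun i => (a i : ℤ)) (fun i => (e i : ℤ)) κ =
      (Matrix.of fun i j : Fin n => Z1 t (a j : ℤ) (e i : ℤ) κ).det :=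
  ViciousWalkers.Zpart_eq_det (fun _ _ hij => Nat.cast_lt.2 (ha hij))
    (fun _ _ hij => Nat.cast_lt.2 (he hij)) (fun i j => by have := hapar i j; omega) κ

/-- Lindström–Gessel–Viennot determinant for the partition function. -/
theorem statement2 (n t : ℕ) (hn : 1 ≤ n) (a e : Fin n → ℕ)
    (ha : StrictMono a) (he : StrictMono e)
    (hapar : ∀ i j, a i % 2 = a j % 2) (hepar : ∀ i j, e i % 2 = e j % 2)
    (hte : ∀ i, (a i + e i) % 2 = t % 2) (κ : ℝ) (hκ : 0 < κ) :
    Zpart n t (fun i => (a i : ℤ)) (fun i => (e i : ℤ)) κ =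
      (Matrix.of fun i j : Fin n => Z1 t (a j : ℤ) (e i : ℤ) κ).det :=
  statement2_general n t a e ha he hapar κ
end
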